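/- The operator ω_{N;0} = tr_0[Ω_{N;0}] on h_q = ⊗_{a=1}^{2N}ℂ² has rank 1 and equals ω_{N;0} = v·wᵗ, where v = Σ_{i∈{1,2}^N} e^{(h/2T)·ε_{i_N}} · ⊗_{s=1}^{N}(e_{i_{s−1}} ⊗ e_{i_s}) (the vector e_{i_{s−1}} placed in tensor slot 2s−1 and e_{i_s} in slot 2s, with the periodic convention i_0 ≡ i_N and ε_i = (−1)^{i−1}) and w = Σ_{j∈{1,2}^N} ⊗_{s=1}^{N}(e_{j_s} ⊗ e_{j_s}). Furthermore (w,v) = 2·cosh(h/(2T)), ‖v‖² = 2^N·cosh(h/T) and ‖w‖² = 2^N. -/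

import Mathlib

noncomputable section
open Complex Filter Topology
open scoped Classical

namespace XXZ

/-- The open horizontal strip `S_a` of half-width `a` around the real axis. -/
def strip (a : ℝ) : Set ℂ := {z : ℂ | |z.im| < a}

/-- `ζ_m = min(ζ, π - ζ)`. -/
def zetam (ζ : ℝ) : ℝ := min ζ (Real.pi - ζ)

/-- The ball `B_r` of holomorphic functions on the strip `S_{ζ_m/2}` with sup-norm `≤ r`. -/
def holBall (ζ r : ℝ) : Set (ℂ → ℂ) :=
  {f | DifferentiableOn ℂ f (strip (zetam ζ / 2)) ∧
    ∀ z ∈ strip (zetam ζ / 2), ‖f z‖ ≤ r}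

/-- Hyperbolic cotangent. -/
def cothC (z : ℂ) : ℂ := Complex.cosh z / Complex.sinh z

/-- The kernel `K(ξ) = sgn(π-2ζ)/(2iπ) [coth(ξ-iζ_m) - coth(ξ+iζ_m)]`. -/
def Kker (ζ : ℝ) (ξ : ℂ) : ℂ :=
  ((Real.sign (Real.pi - 2 * ζ) : ℝ) : ℂ) / (2 * (Real.pi : ℂ) * Complex.I) *
    (cothC (ξ - Complex.I * (zetam ζ : ℝ)) - cothC (ξ + Complex.I * (zetam ζ : ℝ)))

/-- The bare energy `e₀(ξ) = h - 2J sin²ζ/(sinh ξ sinh(ξ-iζ))`. -/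
def e0fun (J h ζ : ℝ) (ξ : ℂ) : ℂ :=
  (h : ℂ) - 2 * (J : ℂ) * ((Real.sin ζ : ℝ) : ℂ) ^ 2 /
    (Complex.sinh ξ * Complex.sinh (ξ - Complex.I * (ζ : ℝ)))

/-- `ℵ = (J/T) sinh η = -i (J/T) sin ζ`. -/
def alephC (J T ζ : ℝ) : ℂ := -Complex.I * (J : ℂ) * ((Real.sin ζ : ℝ) : ℂ) / (T : ℂ)

/-- Integral of `f` along the circle `∂D_{0,ε}` from `κ` to `v` in the positive direction. -/
def arcIntegral (ε : ℝ) (κ v : ℂ) (f : ℂ → ℂ) : ℂ :=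
  ∫ θ in (Complex.arg κ)..(toIocMod Real.two_pi_pos (Complex.arg κ) (Complex.arg v)),
    f (circleMap 0 ε θ) * (circleMap 0 ε θ * Complex.I)

/-- The determination `Ln[1+e^A]` of the logarithm of `1 + e^A` along `∂D_{0,ε}`,
`Ln[1+e^A](v) = ∫_κ^v A'(u)/(1+e^{-A(u)}) du + log(1+e^{A(κ)})`,
the integral running from the base point `κ` to `v` in positive direction along `∂D_{0,ε}`. -/
def cLog (ε : ℝ) (κ : ℂ) (A : ℂ → ℂ) (v : ℂ) : ℂ :=
  arcIntegral ε κ v (fun u => deriv A u / (1 + Complex.exp (-(A u)))) +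
    Complex.log (1 + Complex.exp (A κ))

/-- Reduction of `z` modulo `iπℤ` to the fundamental strip `|Im| ≤ π/2`. -/
def reduceIpi (z : ℂ) : ℂ := z - ((round (z.im / Real.pi) : ℤ) : ℂ) * ((Real.pi : ℂ) * Complex.I)

/-- The function `θ`: the `iπ`-periodic determination of
`-i log(sinh(iζ+λ)/sinh(iζ-λ))` used in the paper. -/
def theta (ζ : ℝ) (lam : ℂ) : ℂ :=
  if |(reduceIpi lam).im| < zetam ζ then
    Complex.I * Complex.log
      (Complex.sinh (Complex.I * (ζ : ℝ) + reduceIpi lam) /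
        Complex.sinh (Complex.I * (ζ : ℝ) - reduceIpi lam))
  else
    -(Real.pi : ℂ) * ((Real.sign (Real.pi - 2 * ζ) : ℝ) : ℂ) +
      Complex.I * Complex.log
        (Complex.sinh (Complex.I * (ζ : ℝ) + reduceIpi lam) /
          Complex.sinh (reduceIpi lam - Complex.I * (ζ : ℝ)))

/-- The `+`-boundary value `θ₊` of `θ` on its cuts. -/
def thetaPlus (ζ : ℝ) (lam : ℂ) : ℂ :=
  if -(zetam ζ) ≤ (reduceIpi lam).im ∧ (reduceIpi lam).im < zetam ζ then
    Complex.I * Complex.log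
      (Complex.sinh (Complex.I * (ζ : ℝ) + reduceIpi lam) /
        Complex.sinh (Complex.I * (ζ : ℝ) - reduceIpi lam))
  else
    -(Real.pi : ℂ) * ((Real.sign (Real.pi - 2 * ζ) : ℝ) : ℂ) +
      Complex.I * Complex.log
        (Complex.sinh (Complex.I * (ζ : ℝ) + reduceIpi lam) /
          Complex.sinh (reduceIpi lam - Complex.I * (ζ : ℝ)))

/-- Congruence modulo `iπℤ`. -/
def modIpi (z w : ℂ) : Prop := ∃ k : ℤ, z - w = (k : ℂ) * ((Real.pi : ℂ) * Complex.I)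
/-- `η = -iζ`. -/
def etaC (ζ : ℝ) : ℂ := -Complex.I * (ζ : ℝ)

/-- `ε_i = (-1)^{i-1}`: `+1` on the first basis vector, `-1` on the second. -/
def signOf (i : Fin 2) : ℂ := if i = 0 then 1 else -1

/-- Index of a site of the quantum space: `(ℓ, 0)` is the odd site `2ℓ+1`,
`(ℓ, 1)` the even site `2ℓ+2`, for `ℓ = 0, …, N-1`. -/
abbrev QIdx (N : ℕ) := Fin N × Fin 2

/-- Basis labels of the quantum space `h_q = ⊗_{a=1}^{2N} ℂ²`. -/
abbrev QS (N : ℕ) := QIdx N → Fin 2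

/-- Basis labels of `h_0 ⊗ h_q`. -/
abbrev FI (N : ℕ) := Fin 2 × QS N

/-- The six-vertex R-matrix on `ℂ² ⊗ ℂ²`. -/
def Rmat (η lam : ℂ) : Matrix (Fin 2 × Fin 2) (Fin 2 × Fin 2) ℂ :=
  fun p q =>
    (Complex.sinh η)⁻¹ *
      (if p = q then (if p.1 = p.2 then Complex.sinh (η + lam) else Complex.sinh lam)
       else if p.1 = q.2 ∧ p.2 = q.1 then Complex.sinh η else 0)

/-- The permutation operator on `ℂ² ⊗ ℂ²`. -/
def Pmat : Matrix (Fin 2 × Fin 2) (Fin 2 × Fin 2) ℂ :=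
  fun p q => if p.1 = q.2 ∧ p.2 = q.1 then 1 else 0

/-- Partial transposition in the first tensor factor of `ℂ² ⊗ ℂ²`. -/
def pt1 (M : Matrix (Fin 2 × Fin 2) (Fin 2 × Fin 2) ℂ) :
    Matrix (Fin 2 × Fin 2) (Fin 2 × Fin 2) ℂ :=
  fun p q => M (q.1, p.2) (p.1, q.2)

/-- Embedding of a two-site operator acting on `h_0 ⊗ h_b` (auxiliary space first). -/
def emb0 (N : ℕ) (M : Matrix (Fin 2 × Fin 2) (Fin 2 × Fin 2) ℂ) (b : QIdx N) :
    Matrix (FI N) (FI N) ℂ :=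
  fun p q => (if ∀ c, c ≠ b → p.2 c = q.2 c then 1 else 0) * M (p.1, p.2 b) (q.1, q.2 b)

/-- Embedding of a two-site operator acting on `h_a ⊗ h_0` (auxiliary space second). -/
def embA (N : ℕ) (M : Matrix (Fin 2 × Fin 2) (Fin 2 × Fin 2) ℂ) (a : QIdx N) :
    Matrix (FI N) (FI N) ℂ :=
  fun p q => (if ∀ c, c ≠ a → p.2 c = q.2 c then 1 else 0) * M (p.2 a, p.1) (q.2 a, q.1)

/-- The twist `e^{(h/2T) σ^z_0}` acting on the auxiliary space. -/
def EzFull (N : ℕ) (h T : ℝ) : Matrix (FI N) (FI N) ℂ :=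
  fun p q => if p = q then Complex.exp (((h / (2 * T) : ℝ) : ℂ) * signOf p.1) else 0

/-- The factor `R^{t_{2ℓ}}_{2ℓ,0}(-ℵ/N - ξ) ⬝ R_{0,2ℓ-1}(ξ - ℵ/N)` of the quantum
monodromy matrix; here `ℓ : Fin N` labels the paper's pair of sites `(2ℓ+1, 2ℓ+2)`. -/
def monFactor (J T ζ : ℝ) (N : ℕ) (ξ : ℂ) (ℓ : Fin N) : Matrix (FI N) (FI N) ℂ :=
  embA N (pt1 (Rmat (etaC ζ) (-(alephC J T ζ) / (N : ℂ) - ξ))) (ℓ, 1) *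
    emb0 N (Rmat (etaC ζ) (ξ - alephC J T ζ / (N : ℂ))) (ℓ, 0)

/-- The quantum monodromy matrix `T_{q;0}(ξ)` on `h_0 ⊗ h_q`. -/
def Tmon (J h T ζ : ℝ) (N : ℕ) [NeZero N] (ξ : ℂ) : Matrix (FI N) (FI N) ℂ :=
  (((List.range N).reverse).map (fun i => monFactor J T ζ N ξ (Fin.ofNat N (i : ℕ)))).prod *
    EzFull N h T

/-- Partial trace over the auxiliary space `h_0`. -/
def tr0 {N : ℕ} (M : Matrix (FI N) (FI N) ℂ) : Matrix (QS N) (QS N) ℂ :=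
  fun i j => ∑ a : Fin 2, M (a, i) (a, j)

/-- The quantum transfer matrix `t_q = tr_0 T_{q;0}(0)` at Trotter number `N`. -/
def tq (J h T ζ : ℝ) (N : ℕ) [NeZero N] : Matrix (QS N) (QS N) ℂ :=
  tr0 (Tmon J h T ζ N 0)

/-- `Π_ℓ = P^{t_{2ℓ}}_{2ℓ,0} P_{0,2ℓ-1}` (with `ℓ : Fin N` labelling the paper's `ℓ+1`). -/
def PiOp (N : ℕ) (ℓ : Fin N) : Matrix (FI N) (FI N) ℂ :=
  embA N (pt1 Pmat) (ℓ, 1) * emb0 N Pmat (ℓ, 0)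

/-- `W_ℓ = R^{t_{2ℓ}}_{2ℓ,0}(-ℵ/N) R_{0,2ℓ-1}(-ℵ/N) - Π_ℓ`. -/
def WOp (J T ζ : ℝ) (N : ℕ) (ℓ : Fin N) : Matrix (FI N) (FI N) ℂ :=
  monFactor J T ζ N 0 ℓ - PiOp N ℓ

/-- `Ω_{ℓ;m} = Π_ℓ ⋯ Π_{m+1} e^{(h/2T) σ^z_0 δ_{m,0}}` for paper indices `ℓ ≥ m`. -/
def OmegaOp (h T : ℝ) (N : ℕ) [NeZero N] (ℓ m : ℕ) : Matrix (FI N) (FI N) ℂ :=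
  (((List.range (ℓ - m)).reverse).map (fun i => PiOp N (Fin.ofNat N (m + i : ℕ)))).prod *
    (if m = 0 then EzFull N h T else 1)

/-- `ω_{N;0} = tr_0 Ω_{N;0}`. -/
def omegaN (h T : ℝ) (N : ℕ) [NeZero N] : Matrix (QS N) (QS N) ℂ :=
  tr0 (OmegaOp h T N N 0)

/-- `δt_q`, defined through the decomposition `t_q = ω_{N;0} + δt_q`. -/
def deltaTq (J h T ζ : ℝ) (N : ℕ) [NeZero N] : Matrix (QS N) (QS N) ℂ :=
  tq J h T ζ N - omegaN h T N

/-- `Λ` is a non-degenerate (simple) eigenvalue of `M` which is strictly maximal in modulus. -/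
def IsDomEig {n : Type*} [Fintype n] [DecidableEq n] (M : Matrix n n ℂ) (Λ : ℂ) : Prop :=
  Λ ∈ (Matrix.charpoly M).roots ∧ (Matrix.charpoly M).roots.count Λ = 1 ∧
    ∀ μ ∈ (Matrix.charpoly M).roots, μ ≠ Λ → ‖μ‖ < ‖Λ‖

/-- The vector `v` of Lemma 2.1: `v = Σ_{i ∈ {1,2}^N} e^{(h/2T) ε_{i_N}} ∏_s e_{i_{s-1}}^{(2s-1)} e_{i_s}^{(2s)}`
(periodic convention `i_0 ≡ i_N`). -/
def vVec (h T : ℝ) (N : ℕ) [NeZero N] : QS N → ℂ :=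
  fun g =>
    if ∀ s : Fin N, g (s, 0) = g (s - 1, 1) then
      Complex.exp (((h / (2 * T) : ℝ) : ℂ) * signOf (g ((0 : Fin N) - 1, 1)))
    else 0

/-- The vector `w` of Lemma 2.1: `w = Σ_{j ∈ {1,2}^N} ∏_s e_{j_s}^{(2s-1)} e_{j_s}^{(2s)}`. -/
def wVec (N : ℕ) : QS N → ℂ :=
  fun g => if ∀ s : Fin N, g (s, 0) = g (s, 1) then 1 else 0

end XXZ

/-!
Each `Π_ℓ` is a `0/1` matrix: `P_{0,2ℓ-1}` swaps the auxiliary spin into site `2ℓ-1`, and the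
partial transpose `P^{t}_{2ℓ,0}` is the rank-one operator `|Φ⟩⟨Φ|` with
`Φ = Σ_i e_i ⊗ e_i` on the auxiliary space and site `2ℓ`. The product of `0/1` matrices whose
intermediate index is always unique is the `0/1` matrix of the composed relation, so
`Π_N ⋯ Π_1` is the matrix of an explicit relation: the column configuration is diagonal on every
pair `(2s-1, 2s)`, while the row configuration must pass the auxiliary spin along the chain
`i_N → ⋯ → i_1 → i_0`. Taking the trace over `h_0` closes this chain periodically, which gives
`ω_{N;0} = v wᵗ`. The remaining identities are counts: `v` and `w` are supported on sets of
configurations in bijection with `{1,2}^N`, and they overlap only on the two constant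
configurations.
-/

section RelationMatrix

variable {α : Type*} (R : Type*) [Semiring R]

def Matrix.ofRel (r : α → α → Prop) : Matrix α α R := fun p q => if r p q then 1 else 0

variable {R}

lemma Matrix.ofRel_mul_ofRel [Fintype α] {r s : α → α → Prop}
    (huniq : ∀ p q x y, r p x → s x q → r p y → s y q → x = y) :
    Matrix.ofRel R r * Matrix.ofRel R s = Matrix.ofRel R fun p q => ∃ x, r p x ∧ s x q := by
  ext p q
  simp only [Matrix.ofRel, Matrix.mul_apply, ite_zero_mul_ite_zero, mul_one]
  split_ifs with h
  · obtain ⟨x, hx⟩ := h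
    rw [Finset.sum_eq_single x
      (fun y _ hy => if_neg fun hy' => hy (huniq p q y x hy'.1 hy'.2 hx.1 hx.2)) (by simp),
      if_pos hx]
  · exact Finset.sum_eq_zero fun x _ => if_neg fun hx => h ⟨x, hx⟩

end RelationMatrix

lemma Matrix.rank_vecMulVec_eq_one {K m n : Type*} [Field K] [Fintype n] [DecidableEq n]
    {v : m → K} {w : n → K} (hv : v ≠ 0) (hw : w ≠ 0) : (Matrix.vecMulVec v w).rank = 1 := by
  refine (Matrix.rank_vecMulVec_le v w).antisymm (Nat.one_le_iff_ne_zero.2 fun h => ?_)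
  rw [Matrix.rank, Submodule.finrank_eq_zero, LinearMap.range_eq_bot, ← Matrix.toLin'_apply',
    LinearEquiv.map_eq_zero_iff] at h
  obtain ⟨i, hi⟩ := Function.ne_iff.1 hv
  obtain ⟨j, hj⟩ := Function.ne_iff.1 hw
  exact mul_ne_zero hi hj (congrFun₂ h i j)

lemma Fintype.sum_ite_eq_sum_subtype {α M : Type*} [Fintype α] [AddCommMonoid M]
    (p : α → Prop) [DecidablePred p] (f : α → M) :
    ∑ x, (if p x then f x else 0) = ∑ x : Subtype p, f x := by
  rw [← Finset.sum_filter, Finset.sum_subtype (p := p) _ (by simp)]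

lemma Fintype.sum_comp_apply {ι κ M : Type*} [Fintype ι] [DecidableEq ι] [Fintype κ]
    [AddCommMonoid M] (F : κ → M) (i : ι) :
    ∑ f : ι → κ, F (f i) = Fintype.card κ ^ (Fintype.card ι - 1) • ∑ a, F a := by
  simpa using Fintype.sum_piFinset_apply F Finset.univ i

open Fin.NatCast in
lemma Fin.apply_eq_apply_zero_of_forall_apply_sub_one {N : ℕ} [NeZero N] {β : Type*}
    {f : Fin N → β} (hf : ∀ s, f s = f (s - 1)) (s : Fin N) : f s = f 0 := by
  suffices ∀ k : ℕ, f k = f 0 by simpa using this s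
  intro k
  induction k with
  | zero => simp
  | succ k ih => rw [hf, Nat.cast_succ, add_sub_cancel_right, ih]

open Fin.NatCast in
lemma Fin.forall_iff_forall_lt_natCast {N : ℕ} [NeZero N] (P : Fin N → Prop) :
    (∀ s, P s) ↔ ∀ ℓ < N, P ℓ :=
  ⟨fun h ℓ _ => h ℓ, fun h s => by simpa using h s s.is_lt⟩

namespace XXZ

open Fin.NatCast

lemma sum_exp_mul_signOf (r : ℝ) :
    ∑ a, Complex.exp (r * signOf a) = ((2 * Real.cosh r : ℝ) : ℂ) := by
  simp [signOf, Fin.sum_univ_two, Complex.cosh, two_mul]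

lemma sum_normSq_exp_mul_signOf (r : ℝ) :
    ∑ a, Complex.normSq (Complex.exp (r * signOf a)) = 2 * Real.cosh (2 * r) := by
  simp only [signOf, Fin.sum_univ_two, Real.cosh_eq, Complex.normSq_eq_norm_sq,
    Complex.norm_exp]
  simp [← Real.exp_nat_mul]
  ring_nf

section

variable {N : ℕ}

lemma emb0_Pmat (b : QIdx N) :
    emb0 N Pmat b =
      Matrix.ofRel ℂ fun p q => (∀ c ≠ b, p.2 c = q.2 c) ∧ p.1 = q.2 b ∧ p.2 b = q.1 := by
  ext p q
  simp only [emb0, Pmat, Matrix.ofRel, ite_zero_mul_ite_zero, mul_one]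
  congr

lemma embA_pt1_Pmat (a : QIdx N) :
    embA N (pt1 Pmat) a =
      Matrix.ofRel ℂ fun p q => (∀ c ≠ a, p.2 c = q.2 c) ∧ q.2 a = q.1 ∧ p.1 = p.2 a := by
  ext p q
  simp only [embA, pt1, Pmat, Matrix.ofRel, ite_zero_mul_ite_zero, mul_one]
  congr

def piRel (ℓ : Fin N) : FI N → FI N → Prop
  | (a, g), (b, g') => a = g (ℓ, 1) ∧ b = g (ℓ, 0) ∧ g' (ℓ, 0) = g' (ℓ, 1) ∧
      ∀ c : QIdx N, c.1 ≠ ℓ → g' c = g c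

lemma piOp_eq_ofRel (ℓ : Fin N) : PiOp N ℓ = Matrix.ofRel ℂ (piRel ℓ) := by
  have h01 : ((ℓ, 0) : QIdx N) ≠ (ℓ, 1) := by simp
  rw [PiOp, embA_pt1_Pmat, emb0_Pmat, Matrix.ofRel_mul_ofRel]
  · congr
    ext ⟨a, g⟩ ⟨b, g'⟩
    constructor
    · rintro ⟨⟨x, y⟩, ⟨hyg, hxy, ha⟩, hyg', hx, hb⟩
      dsimp only at hyg hxy ha hyg' hx hb
      refine ⟨ha, ?_, ?_, fun c hc => ?_⟩
      · rw [← hb, hyg _ h01]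
      · rw [← hx, ← hxy, hyg' _ h01.symm]
      · rw [← hyg' c (by grind), hyg c (by grind)]
    · rintro ⟨ha, hb, hg', hgg'⟩
      refine ⟨(g' (ℓ, 0), Function.update g (ℓ, 1) (g' (ℓ, 0))),
        ⟨fun c hc => ?_, by simp, ha⟩, fun c hc => ?_, rfl, by simp [h01, hb]⟩
      · simp [hc]
      · by_cases hc1 : c = (ℓ, 1)
        · simp [hc1, hg']
        · simp only [Function.update_of_ne hc1]
          exact (hgg' c (fun h => by obtain ⟨s, t⟩ := c; fin_cases t <;> simp_all)).symm
  · rintro p q ⟨x, y⟩ ⟨x', y'⟩ ⟨hyg, hxy, -⟩ ⟨-, hx, -⟩ ⟨hyg₂, hxy₂, -⟩ ⟨-, hx₂, -⟩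
    have hxx : x = x' := hx.trans hx₂.symm
    refine Prod.ext hxx (funext fun c => ?_)
    by_cases hc : c = (ℓ, 1)
    · rw [hc, hxy, hxy₂, hxx]
    · rw [← hyg c hc, ← hyg₂ c hc]

lemma ezFull_eq_diagonal (h T : ℝ) :
    EzFull N h T =
      Matrix.diagonal fun p => Complex.exp (((h / (2 * T) : ℝ) : ℂ) * signOf p.1) := by
  ext p q
  simp [EzFull, Matrix.diagonal_apply]

def wConfigEquiv : {g : QS N // ∀ s, g (s, 0) = g (s, 1)} ≃ (Fin N → Fin 2) where
  toFun g s := g.1 (s, 1)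
  invFun f := ⟨fun p => f p.1, by simp⟩
  left_inv g := by ext ⟨s, t⟩; fin_cases t <;> simp [g.2 s]
  right_inv f := by simp

lemma sum_normSq_wVec : ∑ g : QS N, Complex.normSq (wVec N g) = 2 ^ N := by
  simp only [wVec, apply_ite, map_one, map_zero, Fintype.sum_ite_eq_sum_subtype]
  simp [Fintype.card_congr wConfigEquiv]

variable [NeZero N]

/-- `sweep N m` is the paper's `Π_m ⋯ Π_1`. -/
def sweep (N : ℕ) [NeZero N] (m : ℕ) : Matrix (FI N) (FI N) ℂ :=
  ((List.range m).reverse.map fun i : ℕ => PiOp N i).prod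

lemma sweep_succ (m : ℕ) : sweep N (m + 1) = PiOp N m * sweep N m := by
  simp [sweep, List.range_succ]

lemma omegaOp_eq_sweep_mul (h T : ℝ) : OmegaOp h T N N 0 = sweep N N * EzFull N h T := by
  simp [OmegaOp, sweep, Fin.ofNat_eq_cast]

/-- Each `Π_ℓ` requires the auxiliary spin on its left to be `g (ℓ, 1)` and passes `g (ℓ, 0)`
on to its right; `auxChain g c m a` says that this chain through `Π_m ⋯ Π_1` starts at `a`
and ends at `c`. -/
def auxChain (g : QS N) (c : Fin 2) : ℕ → Fin 2 → Prop
  | 0, a => a = c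
  | m + 1, a => a = g (m, 1) ∧ auxChain g c m (g (m, 0))

lemma auxChain_congr {g g' : QS N} {c : Fin 2} {m : ℕ}
    (hgg' : ∀ ℓ < m, ∀ t, g (ℓ, t) = g' (ℓ, t)) (a : Fin 2) :
    auxChain g c m a ↔ auxChain g' c m a := by
  induction m generalizing a with
  | zero => rfl
  | succ m ih =>
    simp only [auxChain, hgg' m m.lt_succ_self, ih fun ℓ hℓ => hgg' ℓ (Nat.lt_succ_of_lt hℓ)]

lemma auxChain_succ_iff {g : QS N} {c : Fin 2} {m : ℕ} {a : Fin 2} :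
    auxChain g c (m + 1) a ↔
      a = g (m, 1) ∧ g (0, 0) = c ∧ ∀ ℓ < m, g ((ℓ + 1 : ℕ), 0) = g (ℓ, 1) := by
  induction m generalizing a with
  | zero => simp [auxChain]
  | succ m ih =>
    rw [auxChain, ih, Nat.forall_lt_succ_right]
    tauto

lemma auxChain_self_iff {g : QS N} {a : Fin 2} :
    auxChain g a N a ↔ a = g (0 - 1, 1) ∧ ∀ s : Fin N, g (s, 0) = g (s - 1, 1) := by
  obtain ⟨n, rfl⟩ := Nat.exists_eq_succ_of_ne_zero (NeZero.ne N)
  have hlast : (n : Fin (n + 1)) = 0 - 1 := by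
    rw [zero_sub, eq_neg_iff_add_eq_zero, ← Nat.cast_succ, Fin.natCast_self]
  rw [auxChain_succ_iff, Fin.forall_iff_forall_lt_natCast, Nat.forall_lt_succ_left, hlast]
  simp only [Nat.cast_zero, Nat.cast_succ, add_sub_cancel_right]
  constructor <;> rintro ⟨rfl, h0, h⟩ <;> exact ⟨rfl, h0, h⟩

def sweepRel (m : ℕ) : FI N → FI N → Prop
  | (a, g), (c, k) => auxChain g c m a ∧
      ∀ s : Fin N, ((s : ℕ) < m → k (s, 0) = k (s, 1)) ∧ (m ≤ s → ∀ t, g (s, t) = k (s, t))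

lemma natCast_eq_iff_val_eq {m : ℕ} (hm : m < N) (s : Fin N) : s = m ↔ (s : ℕ) = m := by
  rw [Fin.ext_iff, Fin.val_cast_of_lt hm]

lemma piRel_sweepRel_unique {m : ℕ} (hm : m < N) :
    ∀ p q x y : FI N, piRel m p x → sweepRel m x q → piRel m p y → sweepRel m y q → x = y := by
  rintro ⟨a, g⟩ ⟨c, k⟩ ⟨b, g'⟩ ⟨b', g''⟩ ⟨-, hb, -, hoff⟩ ⟨-, hk⟩ ⟨-, hb', -, hoff'⟩ ⟨-, hk'⟩
  refine Prod.ext (hb.trans hb'.symm) (funext fun ⟨s, t⟩ => ?_)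
  by_cases hsm : s = m
  · have hms : m ≤ (s : ℕ) := ((natCast_eq_iff_val_eq hm s).1 hsm).ge
    exact ((hk s).2 hms t).trans ((hk' s).2 hms t).symm
  · exact (hoff (s, t) hsm).trans (hoff' (s, t) hsm).symm

lemma exists_piRel_sweepRel_iff {m : ℕ} (hm : m < N) (a c : Fin 2) (g k : QS N) :
    (∃ x, piRel m (a, g) x ∧ sweepRel m x (c, k)) ↔ sweepRel (m + 1) (a, g) (c, k) := by
  have hsite := natCast_eq_iff_val_eq hm
  have hlt : ∀ ℓ < m, (ℓ : Fin N) ≠ m := fun ℓ hℓ h => by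
    rw [hsite, Fin.val_cast_of_lt (by omega)] at h; omega
  constructor
  · rintro ⟨⟨b, g'⟩, ⟨ha, rfl, hdiag, hoff⟩, hchain, hk⟩
    refine ⟨⟨ha, (auxChain_congr (fun ℓ hℓ t => hoff (ℓ, t) (hlt ℓ hℓ)) _).1 hchain⟩,
      fun s => ⟨fun hs => ?_, fun hs t => ?_⟩⟩
    · rcases Nat.lt_succ_iff_lt_or_eq.1 hs with hs | hs
      · exact (hk s).1 hs
      · obtain rfl := (hsite s).2 hs
        rw [← (hk _).2 hs.ge, ← (hk _).2 hs.ge, hdiag]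
    · rw [← hoff (s, t) ((hsite s).not.2 (by omega))]
      exact (hk s).2 (by omega) t
  · rintro ⟨⟨ha, hchain⟩, hk⟩
    have hdiag : k (m, 0) = k (m, 1) := (hk m).1 (by rw [Fin.val_cast_of_lt hm]; omega)
    refine ⟨(g (m, 0), fun c => if c.1 = m then k c else g c),
      ⟨ha, rfl, by simpa using hdiag, fun c hc => if_neg hc⟩,
      (auxChain_congr (fun ℓ hℓ t => by simp [hlt ℓ hℓ]) _).1 hchain,
      fun s => ⟨(hk s).1 ∘ Nat.lt_succ_of_lt, fun hs t => ?_⟩⟩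
    by_cases hsm : s = m
    · simp [hsm]
    · simpa [hsm] using (hk s).2 (by rw [hsite] at hsm; omega) t

lemma sweep_eq_ofRel {m : ℕ} (hm : m ≤ N) : sweep N m = Matrix.ofRel ℂ (sweepRel m) := by
  induction m with
  | zero =>
    ext ⟨a, g⟩ ⟨c, k⟩
    simp [sweep, Matrix.ofRel, sweepRel, auxChain, Matrix.one_apply, funext_iff,
      Fin.forall_fin_two]
  | succ m ih =>
    rw [sweep_succ, ih (by omega), piOp_eq_ofRel,
      Matrix.ofRel_mul_ofRel (piRel_sweepRel_unique hm)]
    congr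
    ext ⟨a, g⟩ ⟨c, k⟩
    exact exists_piRel_sweepRel_iff hm a c g k

lemma sweepRel_self_iff {a : Fin 2} {g k : QS N} :
    sweepRel N (a, g) (a, k) ↔ (a = g (0 - 1, 1) ∧ ∀ s : Fin N, g (s, 0) = g (s - 1, 1)) ∧
      ∀ s : Fin N, k (s, 0) = k (s, 1) := by
  simp only [sweepRel, auxChain_self_iff, Fin.is_lt, true_imp_iff, (Fin.is_lt _).not_ge,
    false_imp_iff, and_true]

lemma omegaN_apply (h T : ℝ) (g k : QS N) : omegaN h T N g k = vVec h T N g * wVec N k := by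
  simp only [omegaN, tr0, omegaOp_eq_sweep_mul, sweep_eq_ofRel le_rfl, ezFull_eq_diagonal,
    Matrix.mul_diagonal, Matrix.ofRel, sweepRel_self_iff, and_assoc, ite_and, ite_zero_mul,
    one_mul, Finset.sum_ite_eq', Finset.mem_univ, if_true]
  unfold vVec wVec
  split_ifs <;> simp

def vConfigEquiv : {g : QS N // ∀ s, g (s, 0) = g (s - 1, 1)} ≃ (Fin N → Fin 2) where
  toFun g s := g.1 (s, 1)
  invFun f := ⟨fun p => f (if p.2 = 0 then p.1 - 1 else p.1), by simp⟩
  left_inv g := by ext ⟨s, t⟩; fin_cases t <;> simp [g.2 s]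
  right_inv f := by simp

lemma sum_normSq_vVec (h T : ℝ) :
    ∑ g : QS N, Complex.normSq (vVec h T N g) = 2 ^ N * Real.cosh (h / T) := by
  simp only [vVec, apply_ite, map_zero, Fintype.sum_ite_eq_sum_subtype]
  rw [← vConfigEquiv.symm.sum_comp]
  simp only [vConfigEquiv, Equiv.coe_fn_symm_mk, if_neg one_ne_zero]
  rw [Fintype.sum_comp_apply
      (fun a => Complex.normSq (Complex.exp (((h / (2 * T) : ℝ) : ℂ) * signOf a))),
    sum_normSq_exp_mul_signOf, ← mul_div_assoc, mul_div_mul_left _ _ two_ne_zero,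
    Fintype.card_fin, Fintype.card_fin, nsmul_eq_mul, ← mul_assoc, Nat.cast_pow,
    Nat.cast_ofNat, ← pow_succ, Nat.sub_add_cancel NeZero.one_le]

lemma eq_const_of_vConfig_of_wConfig {g : QS N} (hv : ∀ s, g (s, 0) = g (s - 1, 1))
    (hw : ∀ s, g (s, 0) = g (s, 1)) : g = fun _ => g (0, 1) := by
  have hconst := Fin.apply_eq_apply_zero_of_forall_apply_sub_one (f := fun s => g (s, 1))
    fun s => (hw s).symm.trans (hv s)
  funext ⟨s, t⟩
  fin_cases t
  · exact (hw s).trans (hconst s)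
  · exact hconst s

lemma inner_wVec_vVec (h T : ℝ) :
    ∑ g : QS N, (starRingEnd ℂ) (wVec N g) * vVec h T N g =
      ((2 * Real.cosh (h / (2 * T)) : ℝ) : ℂ) := by
  rw [← sum_exp_mul_signOf, Fin.sum_univ_two, Fintype.sum_eq_add (fun _ => 0) (fun _ => 1)]
  · simp [wVec, vVec]
  · exact fun hc => by simpa using congrFun hc (0, 0)
  · rintro g ⟨h0, h1⟩
    unfold wVec vVec
    split_ifs with hw hv
    · have hg := eq_const_of_vConfig_of_wConfig hv hw
      generalize g (0, 1) = x at hg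
      fin_cases x
      exacts [(h0 hg).elim, (h1 hg).elim]
    all_goals simp

end

theorem omegaN_rank_one_general (h T : ℝ) (N : ℕ) [NeZero N] :
    omegaN h T N = Matrix.vecMulVec (vVec h T N) (wVec N) ∧
    Matrix.rank (omegaN h T N) = 1 ∧
    (∑ g : QS N, (starRingEnd ℂ) (wVec N g) * vVec h T N g) =
      ((2 * Real.cosh (h / (2 * T)) : ℝ) : ℂ) ∧
    (∑ g : QS N, Complex.normSq (vVec h T N g)) = 2 ^ N * Real.cosh (h / T) ∧
    (∑ g : QS N, Complex.normSq (wVec N g)) = 2 ^ N := by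
  have homega : omegaN h T N = Matrix.vecMulVec (vVec h T N) (wVec N) :=
    Matrix.ext (omegaN_apply h T)
  have hv : vVec h T N ≠ 0 := fun hv => by simpa [vVec] using congrFun hv fun _ => 0
  have hw : wVec N ≠ 0 := fun hw => by simpa [wVec] using congrFun hw fun _ => 0
  exact ⟨homega, homega ▸ Matrix.rank_vecMulVec_eq_one hv hw, inner_wVec_vVec h T,
    sum_normSq_vVec h T, sum_normSq_wVec⟩

/-- **Lemma 2.1.** The operator `ω_{N;0} = tr_0 Ω_{N;0}` has rank `1` and equals the outer
product `v ⬝ wᵗ` of the explicit vectors `v` and `w`; moreover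
`(w, v) = 2 cosh(h/2T)`, `‖v‖² = 2^N cosh(h/T)` and `‖w‖² = 2^N`. -/
theorem omegaN_rank_one (J h T ζ : ℝ)
    (hJ : 0 < J) (hh : 0 < h) (hT : 0 < T) (hζ : ζ ∈ Set.Ioo 0 Real.pi)
    (N : ℕ) [NeZero N] :
    omegaN h T N = Matrix.vecMulVec (vVec h T N) (wVec N) ∧
    Matrix.rank (omegaN h T N) = 1 ∧
    (∑ g : QS N, (starRingEnd ℂ) (wVec N g) * vVec h T N g) =
      ((2 * Real.cosh (h / (2 * T)) : ℝ) : ℂ) ∧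
    (∑ g : QS N, Complex.normSq (vVec h T N g)) = 2 ^ N * Real.cosh (h / T) ∧
    (∑ g : QS N, Complex.normSq (wVec N g)) = 2 ^ N :=
  omegaN_rank_one_general h T N

end XXZ
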